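/- (Operator identity for L₁.) Fix k with 1 ≤ k ≤ n, α ∈ ℂⁿ and δ ∈ ℂ. For every twice continuously differentiable function f from an open subset of ℝ^{2n} (coordinates x_{11},…,x_{1n},x_{21},…,x_{2n}) to ℂ, at every point of its domain: Σ_{i≠k} (x_{1i}x_{2k} − x_{1k}x_{2i})·∂_{2i}∂_{1k}f + (Σ_{i=1}^n α_i)·x_{1k}·∂_{1k}f − α_k(Σ_{i=1}^n α_i − δ)·f + α_k·(Σ_{i=1}^n x_{2i}∂_{2i}f − δ·f) = Σ_{i≠k} x_{1i}x_{2k}·(∂_{2i}∂_{1k}f − ∂_{2k}∂_{1i}f) − Σ_{i=1}^n [x_{2i}∂_{2i}(z_k f) − α_i·(z_k f)] + Σ_{i=1}^n x_{2k}∂_{2k}(z_i f), where ∂_{ij} = ∂/∂x_{ij} and z_i f = x_{1i}∂_{1i}f + x_{2i}∂_{2i}f − α_i f. -/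

import Mathlib

open Complex Function

/-- Partial derivative of `f` with respect to the coordinate `p`. -/
noncomputable def pd {n : ℕ} (p : Fin 2 × Fin n)
    (f : ((Fin 2 × Fin n) → ℝ) → ℂ) (x : (Fin 2 × Fin n) → ℝ) : ℂ :=
  deriv (fun s : ℝ => f (Function.update x p s)) (x p)

/-- The Euler operator `z_i f = x_{1i}∂_{1i}f + x_{2i}∂_{2i}f − α_i f`. -/
noncomputable def zop {n : ℕ} (α : Fin n → ℂ) (i : Fin n)
    (f : ((Fin 2 × Fin n) → ℝ) → ℂ) (x : (Fin 2 × Fin n) → ℝ) : ℂ :=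
  (x (0, i) : ℂ) * pd (0, i) f x + (x (1, i) : ℂ) * pd (1, i) f x - α i * f x

/-!
Expanding `∂_{2i}(z_j f)` by the Leibniz rule turns both sides into polynomials in `x`, `α`, `δ`
and the first and second partial derivatives of `f` at `x`. After splitting off the `i = k` terms
of the sums over `i ≠ k`, the two polynomials agree modulo the symmetry
`∂_{2k}∂_{2i} f = ∂_{2i}∂_{2k} f` of the second derivatives, which holds since `f` is `C²`.
-/

open Filter Topology

variable {n : ℕ} {f g : ((Fin 2 × Fin n) → ℝ) → ℂ} {x : (Fin 2 × Fin n) → ℝ}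

theorem DifferentiableAt.hasDerivAt_comp_update (hg : DifferentiableAt ℝ g x)
    (p : Fin 2 × Fin n) :
    HasDerivAt (fun s => g (update x p s)) (fderiv ℝ g x (Pi.single p 1)) (x p) :=
  hg.hasFDerivAt.comp_hasDerivAt_of_eq (x p) (hasDerivAt_update x p (x p))
    (update_eq_self p x).symm

theorem pd_eq_fderiv (hg : DifferentiableAt ℝ g x) (p : Fin 2 × Fin n) :
    pd p g x = fderiv ℝ g x (Pi.single p 1) :=
  (hg.hasDerivAt_comp_update p).deriv

theorem hasDerivAt_pd (hg : DifferentiableAt ℝ g x) (p : Fin 2 × Fin n) :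
    HasDerivAt (fun s => g (update x p s)) (pd p g x) (x p) :=
  pd_eq_fderiv hg p ▸ hg.hasDerivAt_comp_update p

theorem pd_eventuallyEq_fderiv (hf : ContDiffAt ℝ 1 f x) (p : Fin 2 × Fin n) :
    pd p f =ᶠ[𝓝 x] fun y => fderiv ℝ f y (Pi.single p 1) := by
  filter_upwards [hf.eventually (by simp)] with y hy
  exact pd_eq_fderiv (hy.differentiableAt one_ne_zero) p

theorem ContDiffAt.differentiableAt_fderiv (hf : ContDiffAt ℝ 2 f x) :
    DifferentiableAt ℝ (fderiv ℝ f) x :=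
  (hf.fderiv_right (m := 1) le_rfl).differentiableAt one_ne_zero

theorem ContDiffAt.differentiableAt_pd (hf : ContDiffAt ℝ 2 f x) (q : Fin 2 × Fin n) :
    DifferentiableAt ℝ (pd q f) x :=
  (hf.differentiableAt_fderiv.clm_apply (differentiableAt_const _)).congr_of_eventuallyEq
    (pd_eventuallyEq_fderiv (hf.of_le one_le_two) q)

theorem fderiv_pd (hf : ContDiffAt ℝ 2 f x) (q : Fin 2 × Fin n) :
    fderiv ℝ (pd q f) x = (fderiv ℝ (fderiv ℝ f) x).flip (Pi.single q 1) := by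
  rw [(pd_eventuallyEq_fderiv (hf.of_le one_le_two) q).fderiv_eq,
    fderiv_clm_apply hf.differentiableAt_fderiv (differentiableAt_const _)]
  simp

theorem pd_pd_comm (hf : ContDiffAt ℝ 2 f x) (p q : Fin 2 × Fin n) :
    pd p (pd q f) x = pd q (pd p f) x := by
  rw [pd_eq_fderiv (hf.differentiableAt_pd q), pd_eq_fderiv (hf.differentiableAt_pd p),
    fderiv_pd hf, fderiv_pd hf]
  exact hf.isSymmSndFDerivAt (by simp) _ _

theorem hasDerivAt_ofReal_update_apply (x : (Fin 2 × Fin n) → ℝ) (p q : Fin 2 × Fin n)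
    (s : ℝ) :
    HasDerivAt (fun s => ((update x p s q : ℝ) : ℂ))
      ((Pi.single p 1 : (Fin 2 × Fin n) → ℝ) q : ℂ) s :=
  (hasDerivAt_pi.1 (hasDerivAt_update x p s) q).ofReal_comp

theorem pd_zop (α : Fin n → ℂ) (j : Fin n) (hf : DifferentiableAt ℝ f x)
    (hf₀ : DifferentiableAt ℝ (pd (0, j) f) x) (hf₁ : DifferentiableAt ℝ (pd (1, j) f) x)
    (p : Fin 2 × Fin n) :
    pd p (zop α j f) x =
      (Pi.single p 1 : (Fin 2 × Fin n) → ℝ) (0, j) * pd (0, j) f x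
          + x (0, j) * pd p (pd (0, j) f) x
        + ((Pi.single p 1 : (Fin 2 × Fin n) → ℝ) (1, j) * pd (1, j) f x
          + x (1, j) * pd p (pd (1, j) f) x)
        - α j * pd p f x := by
  have h := (((hasDerivAt_ofReal_update_apply x p (0, j) (x p)).mul (hasDerivAt_pd hf₀ p)).add
    ((hasDerivAt_ofReal_update_apply x p (1, j) (x p)).mul (hasDerivAt_pd hf₁ p))).sub
    ((hasDerivAt_pd hf p).const_mul (α j))
  simp only [update_eq_self] at h
  exact h.deriv

theorem stmt16_general {n : ℕ} (α : Fin n → ℂ) (δ : ℂ) (k : Fin n)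
    (U : Set ((Fin 2 × Fin n) → ℝ)) (hU : IsOpen U)
    (f : ((Fin 2 × Fin n) → ℝ) → ℂ) (hf : ContDiffOn ℝ 2 f U)
    (x : (Fin 2 × Fin n) → ℝ) (hx : x ∈ U) :
    ∑ i ∈ Finset.univ \ {k},
        ((x (0, i) * x (1, k) - x (0, k) * x (1, i) : ℝ) : ℂ)
          * pd (1, i) (pd (0, k) f) x
      + (∑ i, α i) * (x (0, k) : ℂ) * pd (0, k) f x
      - α k * ((∑ i, α i) - δ) * f x
      + α k * ((∑ i, (x (1, i) : ℂ) * pd (1, i) f x) - δ * f x)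
      = ∑ i ∈ Finset.univ \ {k},
          ((x (0, i) * x (1, k) : ℝ) : ℂ)
            * (pd (1, i) (pd (0, k) f) x - pd (1, k) (pd (0, i) f) x)
        - ∑ i, ((x (1, i) : ℂ) * pd (1, i) (zop α k f) x - α i * zop α k f x)
        + ∑ i, (x (1, k) : ℂ) * pd (1, k) (zop α i f) x := by
  have hf : ContDiffAt ℝ 2 f x := hf.contDiffAt (hU.mem_nhds hx)
  have hz (i j : Fin n) : pd (1, i) (zop α j f) x =
      x (0, j) * pd (1, i) (pd (0, j) f) x
        + ((if j = i then pd (1, j) f x else 0) + x (1, j) * pd (1, i) (pd (1, j) f) x)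
        - α j * pd (1, i) f x := by
    rw [pd_zop α j (hf.differentiableAt two_ne_zero) (hf.differentiableAt_pd (0, j))
      (hf.differentiableAt_pd (1, j))]
    simp [Pi.single_apply, apply_ite, ite_mul]
  have hsymm (i : Fin n) : pd (1, k) (pd (1, i) f) x = pd (1, i) (pd (1, k) f) x :=
    pd_pd_comm hf _ _
  simp only [hz, zop, hsymm]
  simp only [Finset.sum_sdiff_eq_sub (Finset.subset_univ _), Finset.sum_singleton,
    ofReal_sub, ofReal_mul, mul_add, mul_sub, sub_mul, mul_ite, mul_zero, Finset.mul_sum,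
    Finset.sum_mul, Finset.sum_add_distrib, Finset.sum_sub_distrib, Finset.sum_ite_eq,
    Finset.sum_ite_eq', Finset.mem_univ, if_true]
  simp only [mul_comm, mul_left_comm, mul_assoc]
  ring

/-- the Weyl-algebra reduction identity for the operator `L₁`,
stated as an identity of differential operators applied to an arbitrary `C²`
function `f` on an open subset of `ℝ^{2n}`. -/
theorem stmt16 {n : ℕ} (hn : 1 ≤ n) (α : Fin n → ℂ) (δ : ℂ) (k : Fin n)
    (U : Set ((Fin 2 × Fin n) → ℝ)) (hU : IsOpen U)
    (f : ((Fin 2 × Fin n) → ℝ) → ℂ) (hf : ContDiffOn ℝ 2 f U)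
    (x : (Fin 2 × Fin n) → ℝ) (hx : x ∈ U) :
    ∑ i ∈ Finset.univ \ {k},
        ((x (0, i) * x (1, k) - x (0, k) * x (1, i) : ℝ) : ℂ)
          * pd (1, i) (pd (0, k) f) x
      + (∑ i, α i) * (x (0, k) : ℂ) * pd (0, k) f x
      - α k * ((∑ i, α i) - δ) * f x
      + α k * ((∑ i, (x (1, i) : ℂ) * pd (1, i) f x) - δ * f x)
      = ∑ i ∈ Finset.univ \ {k},
          ((x (0, i) * x (1, k) : ℝ) : ℂ)
            * (pd (1, i) (pd (0, k) f) x - pd (1, k) (pd (0, i) f) x)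
        - ∑ i, ((x (1, i) : ℂ) * pd (1, i) (zop α k f) x - α i * zop α k f x)
        + ∑ i, (x (1, k) : ℂ) * pd (1, k) (zop α i f) x :=
  stmt16_general α δ k U hU f hf x hx
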